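/- Under the same assumptions, τ ↦ N*(τ) is continuous on (0, τ̂). -/

import Mathlib

/-!
`N*` is non-increasing: a control reaching `B(0, r)` at time `τ₁`, switched off afterwards, keeps
the state there because `T` is a contraction. For the converse estimate, run an optimal control
for time `c + a` from time `c` on: it misses the target at time `a` only by the free motion
`T_a y` of the deviation `y = ψ - z(c)`, where `‖y‖ ≤ ‖ψ - T_c ψ‖ + ‖B‖ N*(c + a) c`. Dually to
the observability inequality (Hahn–Banach), `T_τ y` can be steered approximately to `0` with
controls of norm `K(τ) ‖y‖`; repeating this on the dyadic pieces `(τ - τ/2^k, τ - τ/2^(k+1)]`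
steers it exactly, at cost `K(τ/2) ‖y‖ + ε`. Hence `|N*(b) - N*(a)|` is bounded by
`K(min a b / 2) (‖ψ - T_{|b-a|} ψ‖ + ‖B‖ N*(a) |b - a|)`, which tends to `0` as `b → a`.
-/

open MeasureTheory Filter

/-- The state trajectory `z(t;ψ,u) = T_t ψ + ∫_0^t T_{t-σ} B u(σ) dσ`. -/
noncomputable def traj {X U : Type*} [NormedAddCommGroup X] [NormedSpace ℝ X] [CompleteSpace X]
    [NormedAddCommGroup U] [NormedSpace ℝ U]
    (T : ℝ → X →L[ℝ] X) (B : U →L[ℝ] X) (ψ : X) (u : ℝ → U) (t : ℝ) : X :=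
  T t ψ + ∫ σ in Set.Ioc 0 t, T (t - σ) (B (u σ))

open Set Topology
open scoped RealInnerProductSpace

theorem norm_smul_norm_inv_le {E : Type*} [NormedAddCommGroup E] [NormedSpace ℝ E] {M : ℝ}
    (hM : 0 ≤ M) (v : E) : ‖(M * ‖v‖⁻¹) • v‖ ≤ M := by
  rw [norm_smul, Real.norm_eq_abs, abs_of_nonneg (by positivity), mul_assoc]
  exact mul_le_of_le_one_right hM (inv_mul_le_one_of_le₀ le_rfl (norm_nonneg v))

theorem real_inner_smul_norm_inv_self {E : Type*} [NormedAddCommGroup E] [InnerProductSpace ℝ E]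
    (M : ℝ) (v : E) : ⟪v, (M * ‖v‖⁻¹) • v⟫ = M * ‖v‖ := by
  rcases eq_or_ne v 0 with rfl | hv
  · simp
  · rw [real_inner_smul_right, real_inner_self_eq_norm_sq]
    field_simp

theorem integral_Ioc_comp_sub_left {E : Type*} [NormedAddCommGroup E] [NormedSpace ℝ E]
    (g : ℝ → E) {τ : ℝ} (hτ : 0 ≤ τ) : ∫ σ in Ioc 0 τ, g (τ - σ) = ∫ σ in Ioc 0 τ, g σ := by
  rw [← intervalIntegral.integral_of_le hτ, ← intervalIntegral.integral_of_le hτ]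
  simp [intervalIntegral.integral_comp_sub_left g τ]

/-- The concatenation of the controls `g k`, the `k`-th one being run on `(t k, t (k + 1)]`. -/
noncomputable def glue {U : Type*} [NormedAddCommGroup U] (t : ℕ → ℝ) (g : ℕ → ℝ → U) (σ : ℝ) :
    U :=
  ∑' k, (Ioc (t k) (t (k + 1))).indicator (fun s => g k (s - t k)) σ

section Glue

variable {U : Type*} [NormedAddCommGroup U] {t : ℕ → ℝ} {g : ℕ → ℝ → U}

theorem notMem_Ioc_succ_of_ne (ht : Monotone t) {σ : ℝ} {j k : ℕ}
    (hk : σ ∈ Ioc (t k) (t (k + 1))) (hjk : j ≠ k) : σ ∉ Ioc (t j) (t (j + 1)) :=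
  fun hj => Set.disjoint_left.1 (ht.pairwise_disjoint_on_Ioc_succ hjk) hj hk

theorem hasSum_glue (ht : Monotone t) (σ : ℝ) :
    HasSum (fun k => (Ioc (t k) (t (k + 1))).indicator (fun s => g k (s - t k)) σ)
      (glue t g σ) := by
  refine Summable.hasSum ?_
  by_cases h : ∃ k, σ ∈ Ioc (t k) (t (k + 1))
  · obtain ⟨k, hk⟩ := h
    exact (hasSum_single k fun j hj =>
      indicator_of_notMem (notMem_Ioc_succ_of_ne ht hk hj) _).summable
  · simp [indicator_of_notMem (not_exists.1 h _), summable_zero]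

theorem glue_eq_of_mem (ht : Monotone t) {σ : ℝ} {k : ℕ} (hk : σ ∈ Ioc (t k) (t (k + 1))) :
    glue t g σ = g k (σ - t k) := by
  rw [(hasSum_glue ht σ).unique
    (hasSum_single k fun j hj => indicator_of_notMem (notMem_Ioc_succ_of_ne ht hk hj) _),
    indicator_of_mem hk]

theorem norm_glue_le (ht : Monotone t) {C : ℝ} (hC : 0 ≤ C) (hg : ∀ k s, ‖g k s‖ ≤ C) (σ : ℝ) :
    ‖glue t g σ‖ ≤ C := by
  by_cases h : ∃ k, σ ∈ Ioc (t k) (t (k + 1))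
  · obtain ⟨k, hk⟩ := h
    rw [glue_eq_of_mem ht hk]
    exact hg _ _
  · simp [glue, indicator_of_notMem (not_exists.1 h _), hC]

theorem stronglyMeasurable_glue (ht : Monotone t) (hg : ∀ k, StronglyMeasurable (g k)) :
    StronglyMeasurable (glue t g) :=
  stronglyMeasurable_of_tendsto atTop
    (fun N => Finset.stronglyMeasurable_fun_sum (Finset.range N) fun k _ =>
      ((hg k).comp_measurable (measurable_sub_const (t k))).indicator measurableSet_Ioc)
    (tendsto_pi_nhds.2 fun σ => (hasSum_glue ht σ).tendsto_sum_nat)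

end Glue

section Traj

variable {X U : Type*} [NormedAddCommGroup X] [NormedSpace ℝ X] [CompleteSpace X]
  [NormedAddCommGroup U] [NormedSpace ℝ U] {T : ℝ → X →L[ℝ] X} {B : U →L[ℝ] X}

theorem traj_congr {ψ : X} {f g : ℝ → U} {t : ℝ} (h : EqOn f g (Ioc 0 t)) :
    traj T B ψ f t = traj T B ψ g t := by
  simp only [traj]
  rw [setIntegral_congr_fun measurableSet_Ioc fun σ hσ => by rw [h hσ]]

theorem traj_zero (ψ : X) (t : ℝ) : traj T B ψ 0 t = T t ψ := by
  simp [traj]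

end Traj

structure IsContractionSemigroup {X : Type*} [NormedAddCommGroup X] [NormedSpace ℝ X]
    (T : ℝ → X →L[ℝ] X) : Prop where
  zero_eq : T 0 = 1
  add_eq_comp : ∀ s t : ℝ, 0 ≤ s → 0 ≤ t → T (s + t) = (T s).comp (T t)
  continuous_apply : ∀ x : X, Continuous fun t => T t x
  norm_le_one : ∀ t : ℝ, 0 ≤ t → ‖T t‖ ≤ 1

def admissibleCosts {X U : Type*} [NormedAddCommGroup X] [NormedSpace ℝ X] [CompleteSpace X]
    [NormedAddCommGroup U] [NormedSpace ℝ U]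
    (T : ℝ → X →L[ℝ] X) (B : U →L[ℝ] X) (ψ : X) (r τ : ℝ) : Set ℝ :=
  {C : ℝ | 0 ≤ C ∧ ∃ f : ℝ → U,
    AEStronglyMeasurable f (volume.restrict (Ioo 0 τ)) ∧
    (∀ᵐ t ∂volume.restrict (Ioo 0 τ), ‖f t‖ ≤ C) ∧
    traj T B ψ f τ ∈ Metric.closedBall (0 : X) r}

section AdmissibleCosts

variable {X U : Type*} [NormedAddCommGroup X] [NormedSpace ℝ X] [CompleteSpace X]
  [NormedAddCommGroup U] [NormedSpace ℝ U]
  {T : ℝ → X →L[ℝ] X} {B : U →L[ℝ] X} {ψ : X} {r τ C : ℝ}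

theorem mem_admissibleCosts (hC : 0 ≤ C) {f : ℝ → U} (hf : StronglyMeasurable f)
    (hfC : ∀ σ, ‖f σ‖ ≤ C) (h : traj T B ψ f τ ∈ Metric.closedBall 0 r) :
    C ∈ admissibleCosts T B ψ r τ :=
  ⟨hC, f, hf.aestronglyMeasurable, .of_forall hfC, h⟩

theorem exists_stronglyMeasurable_of_mem_admissibleCosts (hC : C ∈ admissibleCosts T B ψ r τ) :
    ∃ f : ℝ → U, StronglyMeasurable f ∧ (∀ σ, ‖f σ‖ ≤ C) ∧
      traj T B ψ f τ ∈ Metric.closedBall 0 r := by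
  obtain ⟨hC, f, ⟨f₀, hf₀, hff₀⟩, hfC, hball⟩ := hC
  -- cut `f₀` off where it exceeds `C`, which happens only on a null set of `(0, τ)`
  set s := {σ | ‖f₀ σ‖ ≤ C}
  have hs : MeasurableSet s := measurableSet_le hf₀.norm.measurable measurable_const
  refine ⟨s.indicator f₀, hf₀.indicator hs, fun σ => ?_, ?_⟩
  · by_cases hσ : σ ∈ s
    · rwa [indicator_of_mem hσ]
    · rwa [indicator_of_notMem hσ, norm_zero]
  · have h_ae : ∀ᵐ σ ∂volume.restrict (Ioc 0 τ), s.indicator f₀ σ = f σ := by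
      rw [← Measure.restrict_congr_set Ioo_ae_eq_Ioc]
      filter_upwards [hff₀, hfC] with σ hσ hσC
      rw [hσ, indicator_of_mem (show σ ∈ s from (by rwa [← hσ] : ‖f₀ σ‖ ≤ C))]
    have h_traj : traj T B ψ (s.indicator f₀) τ = traj T B ψ f τ := by
      simp only [traj]
      congr 1
      exact integral_congr_ae (h_ae.mono fun σ hσ => by simp only [hσ])
    rwa [h_traj]

end AdmissibleCosts

namespace IsContractionSemigroup

section NormedSpace

variable {X U : Type*} [NormedAddCommGroup X] [NormedSpace ℝ X]
  [NormedAddCommGroup U] [NormedSpace ℝ U]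
  {T : ℝ → X →L[ℝ] X} (hT : IsContractionSemigroup T) {B : U →L[ℝ] X}
include hT

theorem norm_apply_le {t : ℝ} (ht : 0 ≤ t) (x : X) : ‖T t x‖ ≤ ‖x‖ := by
  simpa using (T t).le_of_opNorm_le (hT.norm_le_one t ht) x

theorem continuous_uncurry_max : Continuous fun p : ℝ × X => T (max p.1 0) p.2 := by
  refine continuous_iff_continuousAt.2 fun ⟨t₀, x₀⟩ => ?_
  have h_orbit : Continuous fun t : ℝ => T (max t 0) x₀ :=
    (hT.continuous_apply x₀).comp (continuous_id.max continuous_const)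
  -- contractivity makes the family `T t` equicontinuous, so strong continuity suffices
  have h_le (p : ℝ × X) : ‖T (max p.1 0) p.2 - T (max t₀ 0) x₀‖
      ≤ ‖p.2 - x₀‖ + ‖T (max p.1 0) x₀ - T (max t₀ 0) x₀‖ := by
    have := norm_sub_le_norm_sub_add_norm_sub (T (max p.1 0) p.2) (T (max p.1 0) x₀)
      (T (max t₀ 0) x₀)
    rw [← map_sub] at this
    exact this.trans (add_le_add_left (hT.norm_apply_le (le_max_right _ _) _) _)
  have h₁ : Tendsto (fun p : ℝ × X => ‖p.2 - x₀‖) (𝓝 (t₀, x₀)) (𝓝 0) := by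
    simpa using (continuous_snd.sub (continuous_const (y := x₀))).norm.tendsto (t₀, x₀)
  have h₂ : Tendsto (fun p : ℝ × X => ‖T (max p.1 0) x₀ - T (max t₀ 0) x₀‖)
      (𝓝 (t₀, x₀)) (𝓝 0) := by
    simpa using ((h_orbit.comp continuous_fst).sub
      (continuous_const (y := T (max t₀ 0) x₀))).norm.tendsto (t₀, x₀)
  rw [ContinuousAt, tendsto_iff_norm_sub_tendsto_zero]
  exact squeeze_zero (fun _ => norm_nonneg _) h_le (by simpa using h₁.add h₂)

theorem norm_kernel_le {f : ℝ → U} {C : ℝ} (hfC : ∀ σ, ‖f σ‖ ≤ C) {t σ : ℝ} (hσ : σ ≤ t) :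
    ‖T (t - σ) (B (f σ))‖ ≤ ‖B‖ * C :=
  (hT.norm_apply_le (sub_nonneg.2 hσ) _).trans ((B.le_opNorm _).trans (by gcongr; exact hfC σ))

theorem integrableOn_kernel {f : ℝ → U} {C : ℝ} (hf : StronglyMeasurable f)
    (hfC : ∀ σ, ‖f σ‖ ≤ C) {a b t : ℝ} (hbt : b ≤ t) :
    IntegrableOn (fun σ => T (t - σ) (B (f σ))) (Ioc a b) := by
  have hmax : StronglyMeasurable fun σ => T (max (t - σ) 0) (B (f σ)) :=
    hT.continuous_uncurry_max.comp_stronglyMeasurable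
      ((continuous_const.sub continuous_id).stronglyMeasurable.prodMk
        (B.continuous.comp_stronglyMeasurable hf))
  have hEq : EqOn (fun σ => T (max (t - σ) 0) (B (f σ))) (fun σ => T (t - σ) (B (f σ)))
      (Ioc a b) := fun σ hσ => by simp only [max_eq_left (by linarith [hσ.2] : 0 ≤ t - σ)]
  refine (Measure.integrableOn_of_bounded (M := ‖B‖ * C) measure_Ioc_lt_top.ne
    hmax.aestronglyMeasurable ?_).congr_fun hEq measurableSet_Ioc
  filter_upwards [ae_restrict_mem measurableSet_Ioc] with σ hσ
  rw [max_eq_left (by linarith [hσ.2])]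
  exact hT.norm_kernel_le hfC (hσ.2.trans hbt)

variable [CompleteSpace X]

theorem norm_traj_sub_le {ψ : X} {f : ℝ → U} {C : ℝ} (hfC : ∀ σ, ‖f σ‖ ≤ C) {t : ℝ}
    (ht : 0 ≤ t) : ‖traj T B ψ f t - T t ψ‖ ≤ ‖B‖ * C * t := by
  have := norm_setIntegral_le_of_norm_le_const (measure_Ioc_lt_top (μ := volume) (a := 0) (b := t))
    fun σ hσ => hT.norm_kernel_le (B := B) hfC hσ.2
  rwa [Real.volume_real_Ioc_of_le ht, sub_zero, ← add_sub_cancel_left (T t ψ)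
    (∫ σ in Ioc 0 t, T (t - σ) (B (f σ)))] at this

theorem norm_traj_le {ψ : X} {f : ℝ → U} {C : ℝ} (hfC : ∀ σ, ‖f σ‖ ≤ C) {t : ℝ}
    (ht : 0 ≤ t) : ‖traj T B ψ f t‖ ≤ ‖ψ‖ + ‖B‖ * C * t := by
  have := norm_le_norm_add_norm_sub' (traj T B ψ f t) (T t ψ)
  linarith [hT.norm_apply_le ht ψ, hT.norm_traj_sub_le (B := B) (ψ := ψ) hfC ht]

theorem traj_add {ψ₁ ψ₂ : X} {f₁ f₂ : ℝ → U} {C₁ C₂ : ℝ} (hf₁ : StronglyMeasurable f₁)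
    (hf₁C : ∀ σ, ‖f₁ σ‖ ≤ C₁) (hf₂ : StronglyMeasurable f₂) (hf₂C : ∀ σ, ‖f₂ σ‖ ≤ C₂) (t : ℝ) :
    traj T B (ψ₁ + ψ₂) (f₁ + f₂) t = traj T B ψ₁ f₁ t + traj T B ψ₂ f₂ t := by
  simp only [traj, Pi.add_apply, ContinuousLinearMap.map_add]
  rw [integral_add (hT.integrableOn_kernel hf₁ hf₁C le_rfl)
    (hT.integrableOn_kernel hf₂ hf₂C le_rfl)]
  abel

theorem traj_smul_add_smul {ψ : X} {f₁ f₂ : ℝ → U} {C₁ C₂ : ℝ} (hf₁ : StronglyMeasurable f₁)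
    (hf₁C : ∀ σ, ‖f₁ σ‖ ≤ C₁) (hf₂ : StronglyMeasurable f₂) (hf₂C : ∀ σ, ‖f₂ σ‖ ≤ C₂)
    {a b : ℝ} (hab : a + b = 1) (t : ℝ) :
    traj T B ψ (a • f₁ + b • f₂) t = a • traj T B ψ f₁ t + b • traj T B ψ f₂ t := by
  have hψ : ψ = a • ψ + b • ψ := by rw [← add_smul, hab, one_smul]
  conv_lhs => rw [hψ]
  rw [hT.traj_add (hf₁.const_smul a) (C₁ := ‖a‖ * C₁) (fun σ => by
      rw [Pi.smul_apply, norm_smul]; gcongr; exact hf₁C σ)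
    (hf₂.const_smul b) (C₂ := ‖b‖ * C₂) (fun σ => by
      rw [Pi.smul_apply, norm_smul]; gcongr; exact hf₂C σ)]
  simp only [traj, Pi.smul_apply, map_smul, smul_add]
  rw [integral_smul, integral_smul]

theorem traj_add_time {ψ : X} {f : ℝ → U} {C : ℝ} (hf : StronglyMeasurable f)
    (hfC : ∀ σ, ‖f σ‖ ≤ C) {a b : ℝ} (ha : 0 ≤ a) (hb : 0 ≤ b) :
    traj T B ψ f (a + b) = traj T B (traj T B ψ f a) (fun σ => f (σ + a)) b := by
  have h_split : ∫ σ in Ioc 0 (a + b), T (a + b - σ) (B (f σ))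
      = (∫ σ in Ioc 0 a, T (a + b - σ) (B (f σ)))
        + ∫ σ in Ioc a (a + b), T (a + b - σ) (B (f σ)) := by
    rw [← Ioc_union_Ioc_eq_Ioc ha (by linarith)]
    exact setIntegral_union (Ioc_disjoint_Ioc_of_le le_rfl) measurableSet_Ioc
      (hT.integrableOn_kernel hf hfC (by linarith)) (hT.integrableOn_kernel hf hfC le_rfl)
  have h_early : ∫ σ in Ioc 0 a, T (a + b - σ) (B (f σ))
      = T b (∫ σ in Ioc 0 a, T (a - σ) (B (f σ))) := by
    rw [← (T b).integral_comp_comm (hT.integrableOn_kernel hf hfC le_rfl)]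
    refine setIntegral_congr_fun measurableSet_Ioc fun σ hσ => ?_
    rw [show a + b - σ = b + (a - σ) by ring, hT.add_eq_comp b _ hb (by linarith [hσ.2])]
    rfl
  have h_late : ∫ σ in Ioc a (a + b), T (a + b - σ) (B (f σ))
      = ∫ σ in Ioc 0 b, T (b - σ) (B (f (σ + a))) := by
    rw [← intervalIntegral.integral_of_le (by linarith), ← intervalIntegral.integral_of_le hb]
    have h_shift (σ : ℝ) : b + a - σ - a = b - σ := by ring
    simpa [add_comm a b, h_shift] using
      (intervalIntegral.integral_comp_add_right (a := 0) (b := b)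
        (fun σ => T (a + b - σ) (B (f σ))) a).symm
  simp only [traj]
  rw [h_split, h_early, h_late, add_comm a b, hT.add_eq_comp b a hb ha, map_add]
  simp only [ContinuousLinearMap.comp_apply]
  abel

theorem norm_traj_le_of_le {ψ : X} {f : ℝ → U} {C : ℝ} (hf : StronglyMeasurable f)
    (hfC : ∀ σ, ‖f σ‖ ≤ C) {s t : ℝ} (hs : 0 ≤ s) (hst : s ≤ t) :
    ‖traj T B ψ f t‖ ≤ ‖traj T B ψ f s‖ + ‖B‖ * C * (t - s) := by
  rw [← add_sub_cancel s t, hT.traj_add_time hf hfC hs (sub_nonneg.2 hst), add_sub_cancel_left]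
  exact hT.norm_traj_le (fun σ => hfC _) (sub_nonneg.2 hst)

theorem traj_glue_succ {ψ : X} {t : ℕ → ℝ} {g : ℕ → ℝ → U} {C : ℝ} (ht : Monotone t)
    (hg : ∀ k, StronglyMeasurable (g k)) (hgC : ∀ k s, ‖g k s‖ ≤ C) {k : ℕ} (htk : 0 ≤ t k) :
    traj T B ψ (glue t g) (t (k + 1))
      = traj T B (traj T B ψ (glue t g) (t k)) (g k) (t (k + 1) - t k) := by
  have hC : 0 ≤ C := (norm_nonneg _).trans (hgC 0 0)
  have h_flow := hT.traj_add_time (B := B) (ψ := ψ) (stronglyMeasurable_glue ht hg)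
    (norm_glue_le ht hC hgC) htk (sub_nonneg.2 (ht k.le_succ))
  rw [add_sub_cancel] at h_flow
  rw [h_flow]
  refine traj_congr fun σ hσ => ?_
  have hσk : σ + t k ∈ Ioc (t k) (t (k + 1)) := ⟨by linarith [hσ.1], by linarith [hσ.2]⟩
  rw [glue_eq_of_mem ht hσk, add_sub_cancel_right]

theorem admissibleCosts_mono {ψ : X} {r τ₁ τ₂ : ℝ} (hτ₁ : 0 ≤ τ₁) (h : τ₁ ≤ τ₂) :
    admissibleCosts T B ψ r τ₁ ⊆ admissibleCosts T B ψ r τ₂ := by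
  intro C hC
  obtain ⟨f, hf, hfC, hball⟩ := exists_stronglyMeasurable_of_mem_admissibleCosts hC
  set f' := (Iic τ₁).indicator f
  have hf' : StronglyMeasurable f' := hf.indicator measurableSet_Iic
  have hf'C : ∀ σ, ‖f' σ‖ ≤ C := fun σ => (norm_indicator_le_norm_self f σ).trans (hfC σ)
  have h_flow := hT.traj_add_time (B := B) (ψ := ψ) hf' hf'C hτ₁ (sub_nonneg.2 h)
  rw [add_sub_cancel, traj_congr (g := 0) fun σ hσ => indicator_of_notMem
      (show σ + τ₁ ∉ Iic τ₁ by simpa using hσ.1) f, traj_zero,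
    traj_congr (g := f) fun σ hσ => indicator_of_mem (show σ ∈ Iic τ₁ from hσ.2) f] at h_flow
  refine mem_admissibleCosts hC.1 hf' hf'C ?_
  rw [h_flow, mem_closedBall_zero_iff]
  exact (hT.norm_apply_le (sub_nonneg.2 h) _).trans (mem_closedBall_zero_iff.1 hball)

end NormedSpace

section InnerProductSpace

variable {X : Type*} [NormedAddCommGroup X] [InnerProductSpace ℝ X] [CompleteSpace X]
  {T : ℝ → X →L[ℝ] X} (hT : IsContractionSemigroup T)
include hT

theorem norm_adjoint_apply_le {t : ℝ} (ht : 0 ≤ t) (η : X) : ‖(T t).adjoint η‖ ≤ ‖η‖ := by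
  simpa using (T t).adjoint.le_of_opNorm_le
    ((ContinuousLinearMap.adjoint.norm_map (T t)).trans_le (hT.norm_le_one t ht)) η

theorem norm_adjoint_apply_sub_le {s t : ℝ} (hs : 0 ≤ s) (hst : s ≤ t) (η : X) :
    ‖(T t).adjoint η - (T s).adjoint η‖ ≤ ‖(T (t - s)).adjoint η - η‖ := by
  have h_comp : T t = (T (t - s)).comp (T s) := by
    rw [← hT.add_eq_comp _ _ (sub_nonneg.2 hst) hs, sub_add_cancel]
  rw [h_comp, ContinuousLinearMap.adjoint_comp, ContinuousLinearMap.comp_apply, ← map_sub]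
  exact hT.norm_adjoint_apply_le hs _

theorem norm_adjoint_apply_sub_self_sq_le {t : ℝ} (ht : 0 ≤ t) (η : X) :
    ‖(T t).adjoint η - η‖ ^ 2 ≤ 2 * (‖η‖ ^ 2 - ⟪η, T t η⟫) := by
  rw [norm_sub_sq_real, ContinuousLinearMap.adjoint_inner_left]
  nlinarith [hT.norm_adjoint_apply_le ht η, norm_nonneg ((T t).adjoint η)]

theorem continuousOn_adjoint_apply (η : X) :
    ContinuousOn (fun t => (T t).adjoint η) (Ici 0) := by
  intro t₀ ht₀
  set g : ℝ → ℝ := fun t => √(2 * (‖η‖ ^ 2 - ⟪η, T |t - t₀| η⟫))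
  have hg : Tendsto g (𝓝[Ici 0] t₀) (𝓝 0) := by
    have : Continuous g := by
      have : Continuous fun t => T |t - t₀| η :=
        (hT.continuous_apply η).comp (continuous_id.sub continuous_const).abs
      exact Real.continuous_sqrt.comp
        (continuous_const.mul (continuous_const.sub (continuous_const.inner this)))
    simpa [g, hT.zero_eq, real_inner_self_eq_norm_sq] using
      (this.tendsto t₀).mono_left nhdsWithin_le_nhds
  have h_le : ∀ t ∈ Ici (0 : ℝ), ‖(T t).adjoint η - (T t₀).adjoint η‖ ≤ g t := by
    intro t ht
    refine Real.le_sqrt_of_sq_le ?_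
    rcases le_total t₀ t with h | h
    · rw [abs_of_nonneg (sub_nonneg.2 h)]
      exact (pow_le_pow_left₀ (norm_nonneg _) (hT.norm_adjoint_apply_sub_le ht₀ h η) 2).trans
        (hT.norm_adjoint_apply_sub_self_sq_le (sub_nonneg.2 h) η)
    · rw [abs_sub_comm, abs_of_nonneg (sub_nonneg.2 h), norm_sub_rev]
      exact (pow_le_pow_left₀ (norm_nonneg _) (hT.norm_adjoint_apply_sub_le ht h η) 2).trans
        (hT.norm_adjoint_apply_sub_self_sq_le (sub_nonneg.2 h) η)
  rw [ContinuousWithinAt, tendsto_iff_norm_sub_tendsto_zero]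
  exact squeeze_zero' (.of_forall fun _ => norm_nonneg _) (eventually_nhdsWithin_of_forall h_le) hg

variable {U : Type*} [NormedAddCommGroup U] [InnerProductSpace ℝ U] [CompleteSpace U]
  {B : U →L[ℝ] X}

theorem inner_traj {ψ : X} {f : ℝ → U} {C : ℝ} (hf : StronglyMeasurable f)
    (hfC : ∀ σ, ‖f σ‖ ≤ C) (η : X) (t : ℝ) :
    ⟪η, traj T B ψ f t⟫
      = ⟪(T t).adjoint η, ψ⟫ + ∫ σ in Ioc 0 t, ⟪B.adjoint ((T (t - σ)).adjoint η), f σ⟫ := by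
  simp only [traj, inner_add_right, ContinuousLinearMap.adjoint_inner_left,
    integral_inner (hT.integrableOn_kernel hf hfC le_rfl)]

end InnerProductSpace

end IsContractionSemigroup

def ObservabilityInequality {X U : Type*} [NormedAddCommGroup X] [InnerProductSpace ℝ X]
    [CompleteSpace X] [NormedAddCommGroup U] [InnerProductSpace ℝ U] [CompleteSpace U]
    (T : ℝ → X →L[ℝ] X) (B : U →L[ℝ] X) (K : ℝ → ℝ) : Prop :=
  ∀ τ : ℝ, 0 < τ → ∀ η : X,
    ‖(T τ).adjoint η‖ ≤ K τ * ∫ t in Ioc 0 τ, ‖B.adjoint ((T t).adjoint η)‖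

namespace IsContractionSemigroup

variable {X U : Type*} [NormedAddCommGroup X] [InnerProductSpace ℝ X] [CompleteSpace X]
  [NormedAddCommGroup U] [InnerProductSpace ℝ U] [CompleteSpace U]
  {T : ℝ → X →L[ℝ] X} (hT : IsContractionSemigroup T) {B : U →L[ℝ] X} {K : ℝ → ℝ}
include hT

theorem exists_control_inner_traj_nonneg (hobs : ObservabilityInequality T B K) {τ : ℝ}
    (hτ : 0 < τ) (hK : 0 ≤ K τ) (y η : X) :
    ∃ q : ℝ → U, StronglyMeasurable q ∧ (∀ σ, ‖q σ‖ ≤ K τ * ‖y‖) ∧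
      0 ≤ ⟪η, traj T B y q τ⟫ := by
  set M := K τ * ‖y‖
  -- the control of norm `M` aligned with the observation `B† T†_{τ - σ} η`
  set G : ℝ → U := fun σ => B.adjoint ((T (max (τ - σ) 0)).adjoint η)
  have hG : Continuous G := B.adjoint.continuous.comp <|
    (hT.continuousOn_adjoint_apply η).comp_continuous
      ((continuous_const.sub continuous_id).max continuous_const)
      fun _ => mem_Ici.2 (le_max_right _ _)
  set q : ℝ → U := fun σ => (M * ‖G σ‖⁻¹) • G σ
  have hq : StronglyMeasurable q :=
    (hG.norm.measurable.inv.const_mul M).stronglyMeasurable.smul hG.stronglyMeasurable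
  have hqM : ∀ σ, ‖q σ‖ ≤ M := fun σ => norm_smul_norm_inv_le (by positivity) _
  have h_inner : ⟪η, traj T B y q τ⟫
      = ⟪(T τ).adjoint η, y⟫ + M * ∫ t in Ioc 0 τ, ‖B.adjoint ((T t).adjoint η)‖ := by
    rw [hT.inner_traj hq hqM, ← integral_const_mul,
      ← integral_Ioc_comp_sub_left (fun t => M * ‖B.adjoint ((T t).adjoint η)‖) hτ.le]
    congr 1
    refine setIntegral_congr_fun measurableSet_Ioc fun σ hσ => ?_
    simp only [q, G, max_eq_left (sub_nonneg.2 hσ.2), real_inner_smul_norm_inv_self]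
  refine ⟨q, hq, hqM, ?_⟩
  have := mul_le_mul_of_nonneg_right (hobs τ hτ η) (norm_nonneg y)
  have := neg_le_of_abs_le (abs_real_inner_le_norm ((T τ).adjoint η) y)
  rw [h_inner]
  nlinarith

theorem exists_approx_null_control (hobs : ObservabilityInequality T B K) {τ : ℝ} (hτ : 0 < τ)
    (hK : 0 ≤ K τ) (y : X) {ε : ℝ} (hε : 0 < ε) :
    ∃ f : ℝ → U, StronglyMeasurable f ∧ (∀ σ, ‖f σ‖ ≤ K τ * ‖y‖) ∧ ‖traj T B y f τ‖ ≤ ε := by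
  by_contra! h
  set R := (fun f => traj T B y f τ) '' {f : ℝ → U | StronglyMeasurable f ∧ ∀ σ, ‖f σ‖ ≤ K τ * ‖y‖}
  have hR : Convex ℝ R := by
    rintro _ ⟨f₁, ⟨hf₁, hf₁M⟩, rfl⟩ _ ⟨f₂, ⟨hf₂, hf₂M⟩, rfl⟩ a b ha hb hab
    refine ⟨a • f₁ + b • f₂, ⟨(hf₁.const_smul a).add (hf₂.const_smul b), fun σ => ?_⟩,
      hT.traj_smul_add_smul hf₁ hf₁M hf₂ hf₂M hab τ⟩
    simpa using convex_closedBall (0 : U) _ (mem_closedBall_zero_iff.2 (hf₁M σ))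
      (mem_closedBall_zero_iff.2 (hf₂M σ)) ha hb hab
  have h0 : (0 : X) ∉ closure R := fun h0 => by
    obtain ⟨_, ⟨f, ⟨hf, hfM⟩, rfl⟩, hdist⟩ := Metric.mem_closure_iff.1 h0 ε hε
    rw [dist_zero_left] at hdist
    exact (h f hf hfM).not_gt hdist
  obtain ⟨φ, u, hφR, hu⟩ := geometric_hahn_banach_closed_point hR.closure isClosed_closure h0
  obtain ⟨q, hq, hqM, h_nonneg⟩ :=
    hT.exists_control_inner_traj_nonneg hobs hτ hK y ((InnerProductSpace.toDual ℝ X).symm φ)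
  have := hφR _ (subset_closure ⟨q, ⟨hq, hqM⟩, rfl⟩)
  rw [← InnerProductSpace.toDual_symm_apply] at this
  simp only [map_zero] at hu
  linarith

theorem exists_null_control (hK : ∀ τ, 0 < τ → 0 < K τ) (hobs : ObservabilityInequality T B K)
    {τ : ℝ} (hτ : 0 < τ) (y : X) {ε : ℝ} (hε : 0 < ε) :
    ∃ f : ℝ → U, StronglyMeasurable f ∧ (∀ σ, ‖f σ‖ ≤ K (τ / 2) * ‖y‖ + ε) ∧
      traj T B y f τ = 0 := by
  -- Steer approximately on the successive halves `(t k, t (k + 1)]` of the remaining time; the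
  -- error left after step `k` is so small that steering it away in step `k + 1` costs at most `ε`.
  set l : ℕ → ℝ := fun k => τ / 2 ^ (k + 1)
  have hl (k : ℕ) : 0 < l k := by positivity
  have h_step (k : ℕ) (z : X) : ∃ g : ℝ → U, StronglyMeasurable g ∧
      (∀ σ, ‖g σ‖ ≤ K (l k) * ‖z‖) ∧ ‖traj T B z g (l k)‖ ≤ min (1 / 2 ^ k) (ε / K (l (k + 1))) :=
    hT.exists_approx_null_control hobs (hl k) (hK _ (hl k)).le z
      (lt_min (by positivity) (div_pos hε (hK _ (hl _))))
  choose g hg_meas hg_le hg_err using h_step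
  let e : ℕ → X := fun k => Nat.rec y (fun k z => traj T B z (g k z) (l k)) k
  let t : ℕ → ℝ := fun k => τ - τ / 2 ^ k
  have ht_sub (k : ℕ) : t (k + 1) - t k = l k := by
    simp only [t, l, pow_succ]
    field_simp
    ring
  have ht_mono : Monotone t := fun i j hij => by
    simp only [t]
    gcongr
    exact one_le_two
  have ht_nonneg (k : ℕ) : 0 ≤ t k := by
    simpa [t] using div_le_self hτ.le (one_le_pow₀ one_le_two)
  set C := K (τ / 2) * ‖y‖ + ε
  have hg_cost (k : ℕ) (σ : ℝ) : ‖g k (e k) σ‖ ≤ C := by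
    cases k with
    | zero =>
      have := hg_le 0 y σ
      simp only [l, zero_add, pow_one] at this
      show ‖g 0 y σ‖ ≤ K (τ / 2) * ‖y‖ + ε
      linarith
    | succ k =>
      have h_err : K (l (k + 1)) * ‖e (k + 1)‖ ≤ ε := by
        rw [← le_div_iff₀' (hK _ (hl (k + 1)))]
        exact (hg_err k (e k)).trans (min_le_right _ _)
      linarith [hg_le (k + 1) (e (k + 1)) σ, mul_nonneg (hK _ (half_pos hτ)).le (norm_nonneg y)]
  have hC : 0 ≤ C := (norm_nonneg _).trans (hg_cost 0 0)
  set f := glue t fun k => g k (e k)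
  have hf : StronglyMeasurable f := stronglyMeasurable_glue ht_mono fun k => hg_meas k (e k)
  have hfC : ∀ σ, ‖f σ‖ ≤ C := norm_glue_le ht_mono hC hg_cost
  have h_traj (N : ℕ) : traj T B y f (t N) = e N := by
    induction N with
    | zero => simp [t, traj, hT.zero_eq, e]
    | succ N ih =>
      rw [hT.traj_glue_succ ht_mono (fun k => hg_meas k (e k)) hg_cost (ht_nonneg N), ih, ht_sub]
  have h_bound (N : ℕ) : ‖traj T B y f τ‖ ≤ (1 + ‖B‖ * C * τ) / 2 ^ N := by
    have h_err : ‖e (N + 1)‖ ≤ 1 / 2 ^ N := (hg_err N (e N)).trans (min_le_left _ _)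
    have h_rest : τ - t (N + 1) ≤ τ / 2 ^ N := by
      simp only [t, pow_succ, sub_sub_cancel, ← div_div]
      exact half_le_self (by positivity)
    calc ‖traj T B y f τ‖ ≤ ‖traj T B y f (t (N + 1))‖ + ‖B‖ * C * (τ - t (N + 1)) :=
          hT.norm_traj_le_of_le hf hfC (ht_nonneg _) (sub_le_self _ (by positivity))
      _ ≤ 1 / 2 ^ N + ‖B‖ * C * (τ / 2 ^ N) := by
          rw [h_traj]
          have := mul_nonneg (norm_nonneg B) hC
          gcongr
      _ = _ := by ring
  have h_lim : Tendsto (fun N : ℕ => (1 + ‖B‖ * C * τ) / (2 : ℝ) ^ N) atTop (𝓝 0) :=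
    tendsto_const_nhds.div_atTop (tendsto_pow_atTop_atTop_of_one_lt one_lt_two)
  exact ⟨f, hf, hfC, norm_le_zero_iff.1 (ge_of_tendsto' h_lim h_bound)⟩

theorem add_mem_admissibleCosts (hK : ∀ τ, 0 < τ → 0 < K τ) (hobs : ObservabilityInequality T B K)
    {ψ : X} {r a c C ε : ℝ} (ha : 0 < a) (hc : 0 ≤ c) (hC : C ∈ admissibleCosts T B ψ r (c + a))
    (hε : 0 < ε) :
    C + K (a / 2) * (‖ψ - T c ψ‖ + ‖B‖ * C * c) + ε ∈ admissibleCosts T B ψ r a := by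
  obtain ⟨f, hf, hfC, hball⟩ := exists_stronglyMeasurable_of_mem_admissibleCosts hC
  -- run `f` from time `c` on, and steer away the deviation `y` of its state at `c` from `ψ`
  set y := ψ - traj T B ψ f c
  have hy : ‖y‖ ≤ ‖ψ - T c ψ‖ + ‖B‖ * C * c := by
    rw [show y = (ψ - T c ψ) - (traj T B ψ f c - T c ψ) from
      (sub_sub_sub_cancel_right _ _ _).symm]
    exact (norm_sub_le _ _).trans (by gcongr; exact hT.norm_traj_sub_le hfC hc)
  obtain ⟨w, hw, hwC, hw0⟩ := hT.exists_null_control hK hobs ha y hε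
  have hfs : StronglyMeasurable fun σ => f (σ + c) := hf.comp_measurable (measurable_add_const c)
  have hKa := (hK _ (half_pos ha)).le
  refine mem_admissibleCosts (by linarith [hC.1, mul_nonneg hKa ((norm_nonneg y).trans hy)])
    (hfs.add hw) (fun σ => ?_) ?_
  · calc ‖f (σ + c) + w σ‖ ≤ C + (K (a / 2) * ‖y‖ + ε) := norm_add_le_of_le (hfC _) (hwC σ)
      _ ≤ _ := by nlinarith
  · have h_traj : traj T B ψ ((fun σ => f (σ + c)) + w) a = traj T B ψ f (c + a) := by
      conv_lhs => rw [← add_sub_cancel (traj T B ψ f c) ψ]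
      rw [hT.traj_add hfs (fun σ => hfC _) hw hwC, hw0, add_zero,
        hT.traj_add_time hf hfC hc ha.le]
    rwa [h_traj]

theorem le_add_of_isLeast_admissibleCosts (hK : ∀ τ, 0 < τ → 0 < K τ)
    (hobs : ObservabilityInequality T B K) {ψ : X} {r a c N₀ N₁ : ℝ} (ha : 0 < a) (hc : 0 ≤ c)
    (h₀ : IsLeast (admissibleCosts T B ψ r a) N₀)
    (h₁ : IsLeast (admissibleCosts T B ψ r (c + a)) N₁) :
    N₀ ≤ N₁ + K (a / 2) * (‖ψ - T c ψ‖ + ‖B‖ * N₁ * c) :=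
  le_of_forall_pos_le_add fun _ hε => h₀.2 (hT.add_mem_admissibleCosts hK hobs ha hc h₁.1 hε)

theorem abs_sub_le_of_isLeast_admissibleCosts (hK : ∀ τ, 0 < τ → 0 < K τ)
    (hobs : ObservabilityInequality T B K) {ψ : X} {r : ℝ} {N : ℝ → ℝ}
    (hN : ∀ τ, 0 < τ → IsLeast (admissibleCosts T B ψ r τ) (N τ)) {a b : ℝ} (ha : 0 < a)
    (hb : 0 < b) :
    |N b - N a| ≤ K (min a b / 2) * (‖ψ - T |b - a| ψ‖ + ‖B‖ * N a * |b - a|) := by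
  have h_anti {s t : ℝ} (hs : 0 < s) (hst : s ≤ t) : N t ≤ N s :=
    (hN s hs).mono (hN t (hs.trans_le hst)) (hT.admissibleCosts_mono hs.le hst)
  rcases le_total a b with h | h
  · have h_le := hT.le_add_of_isLeast_admissibleCosts hK hobs ha (sub_nonneg.2 h) (hN a ha)
      (by simpa using hN b hb)
    have h_cost : ‖B‖ * N b * (b - a) ≤ ‖B‖ * N a * (b - a) := by
      have := h_anti ha h
      gcongr
    have hKa := (hK _ (half_pos ha)).le
    rw [min_eq_left h, abs_of_nonneg (sub_nonneg.2 h), abs_of_nonpos (by linarith [h_anti ha h])]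
    nlinarith
  · have h_le := hT.le_add_of_isLeast_admissibleCosts hK hobs hb (sub_nonneg.2 h) (hN b hb)
      (by simpa using hN a ha)
    rw [min_eq_right h, abs_of_nonpos (sub_nonpos.2 h), neg_sub,
      abs_of_nonneg (by linarith [h_anti hb h])]
    linarith

end IsContractionSemigroup

theorem stmt14_general {X U : Type*} [NormedAddCommGroup X] [InnerProductSpace ℝ X] [CompleteSpace X]
    [NormedAddCommGroup U] [InnerProductSpace ℝ U] [CompleteSpace U]
    (T : ℝ → X →L[ℝ] X) (B : U →L[ℝ] X)
    -- `T` is a `C₀`-semigroup of contractions (generated by `-A`)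
    (hT0 : T 0 = 1)
    (hTadd : ∀ s t : ℝ, 0 ≤ s → 0 ≤ t → T (s + t) = (T s).comp (T t))
    (hTcont : ∀ x : X, Continuous fun t => T t x)
    (hTcontr : ∀ t : ℝ, 0 ≤ t → ‖T t‖ ≤ 1)
    -- the `L¹` observability inequality `K(τ) ∫_0^τ ‖B*T*_t η‖ dt ≥ ‖T*_τ η‖`
    (K : ℝ → ℝ) (hK_pos : ∀ τ : ℝ, 0 < τ → 0 < K τ) (hK_cont : ContinuousOn K (Set.Ioi 0))
    (hobs : ∀ τ : ℝ, 0 < τ → ∀ η : X,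
      ‖(T τ).adjoint η‖ ≤ K τ * ∫ t in Set.Ioc 0 τ, ‖B.adjoint ((T t).adjoint η)‖)
    (r : ℝ) (ψ : X)
    -- `N*(τ)` is the minimal `L^∞`-norm of controls steering `ψ` into `B(0,r)` at time `τ`
    (Nstar : ℝ → ℝ)
    (hNstar : ∀ τ : ℝ, 0 < τ → IsLeast {C : ℝ | 0 ≤ C ∧ ∃ f : ℝ → U,
      AEStronglyMeasurable f (volume.restrict (Set.Ioo 0 τ)) ∧
      (∀ᵐ t ∂volume.restrict (Set.Ioo 0 τ), ‖f t‖ ≤ C) ∧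
      traj T B ψ f τ ∈ Metric.closedBall (0 : X) r} (Nstar τ))
    :
    ContinuousOn Nstar {τ : ℝ | 0 < τ ∧ ∀ s ∈ Set.Ioc (0 : ℝ) τ, r < ‖T s ψ‖} := by
  have hT : IsContractionSemigroup T := ⟨hT0, hTadd, hTcont, hTcontr⟩
  rintro τ ⟨hτ, -⟩
  set g : ℝ → ℝ := fun τ' =>
    K (min τ τ' / 2) * (‖ψ - T |τ' - τ| ψ‖ + ‖B‖ * Nstar τ * |τ' - τ|)
  have hg : ContinuousAt g τ := by
    have hK_at : ContinuousAt K (min τ τ / 2) :=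
      hK_cont.continuousAt (Ioi_mem_nhds (by simpa using half_pos hτ))
    have h_orbit : Continuous fun τ' => T |τ' - τ| ψ :=
      (hTcont ψ).comp (continuous_id.sub continuous_const).abs
    exact (hK_at.comp_of_eq ((continuous_const.min continuous_id).div_const 2).continuousAt rfl).mul
      ((continuous_const.sub h_orbit).norm.add
        (continuous_const.mul (continuous_id.sub continuous_const).abs)).continuousAt
  have hgτ : g τ = 0 := by simp [g, hT0]
  rw [ContinuousWithinAt, tendsto_iff_norm_sub_tendsto_zero]
  refine squeeze_zero' (.of_forall fun _ => norm_nonneg _) (eventually_nhdsWithin_of_forall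
    fun τ' hτ' => hT.abs_sub_le_of_isLeast_admissibleCosts hK_pos hobs hNstar hτ hτ'.1) ?_
  simpa [hgτ] using hg.tendsto.mono_left nhdsWithin_le_nhds

/-- Under the same assumptions as Statement 13, the minimal norm map
`τ ↦ N*(τ)` is continuous on `(0, τ̂)`, where `τ̂ = inf {t : ‖T_t ψ‖ ≤ r}`; the interval
`(0, τ̂)` is expressed as `{τ | 0 < τ ∧ ∀ s ∈ (0,τ], r < ‖T_s ψ‖}`. -/
theorem stmt14 {X U : Type*} [NormedAddCommGroup X] [InnerProductSpace ℝ X] [CompleteSpace X]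
    [NormedAddCommGroup U] [InnerProductSpace ℝ U] [CompleteSpace U]
    (T : ℝ → X →L[ℝ] X) (B : U →L[ℝ] X)
    -- `T` is a `C₀`-semigroup of contractions (generated by `-A`)
    (hT0 : T 0 = 1)
    (hTadd : ∀ s t : ℝ, 0 ≤ s → 0 ≤ t → T (s + t) = (T s).comp (T t))
    (hTcont : ∀ x : X, Continuous fun t => T t x)
    (hTcontr : ∀ t : ℝ, 0 ≤ t → ‖T t‖ ≤ 1)
    -- the `L¹` observability inequality `K(τ) ∫_0^τ ‖B*T*_t η‖ dt ≥ ‖T*_τ η‖`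
    (K : ℝ → ℝ) (hK_pos : ∀ τ : ℝ, 0 < τ → 0 < K τ) (hK_cont : ContinuousOn K (Set.Ioi 0))
    (hobs : ∀ τ : ℝ, 0 < τ → ∀ η : X,
      ‖(T τ).adjoint η‖ ≤ K τ * ∫ t in Set.Ioc 0 τ, ‖B.adjoint ((T t).adjoint η)‖)
    (r : ℝ) (hr : 0 < r) (ψ : X) (hψ : ψ ∉ Metric.closedBall (0 : X) r)
    -- `N*(τ)` is the minimal `L^∞`-norm of controls steering `ψ` into `B(0,r)` at time `τ`
    (Nstar : ℝ → ℝ)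
    (hNstar : ∀ τ : ℝ, 0 < τ → IsLeast {C : ℝ | 0 ≤ C ∧ ∃ f : ℝ → U,
      AEStronglyMeasurable f (volume.restrict (Set.Ioo 0 τ)) ∧
      (∀ᵐ t ∂volume.restrict (Set.Ioo 0 τ), ‖f t‖ ≤ C) ∧
      traj T B ψ f τ ∈ Metric.closedBall (0 : X) r} (Nstar τ))
    :
    ContinuousOn Nstar {τ : ℝ | 0 < τ ∧ ∀ s ∈ Set.Ioc (0 : ℝ) τ, r < ‖T s ψ‖} :=
  stmt14_general T B hT0 hTadd hTcont hTcontr K hK_pos hK_cont hobs r ψ Nstar hNstar
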